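/- arXiv:2206.02300 — 3 statements merged into one kernel-verified Lean document; each statement's English description precedes it below -/
import Mathlib

section
/- In the natural deduction calculus for the purely implicational fragment of minimal logic (rules: assumption, →-elimination, →-introduction), if Γ ⊢ α, then there is a derivation of α from Γ in which every →-introduction application is greedy, i.e., every application concluding φ ⊃ ψ discharges all open occurrences of φ on which its premise ψ depends. -/
/-- Formulas of the purely implicational fragment `M⊃` of minimal logic. -/
inductive Formula : Type
  | var : ℕ → Formula
  | imp : Formula → Formula → Formula
  deriving DecidableEq

/-- Natural deduction derivation trees, with assumption occurrences tagged by a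
class number; an `intro` records the finite set of assumption classes of its
antecedent that it discharges. -/
inductive PTree : Type
  | ax : Formula → ℕ → PTree
  | elim : PTree → PTree → PTree
  | intro : Formula → Finset ℕ → PTree → PTree

/-- The conclusion (end formula) of a derivation tree. -/
def PTree.concl : PTree → Formula
  | .ax φ _ => φ
  | .elim _ q =>
      match PTree.concl q with
      | .imp _ ψ => ψ
      | f => f
  | .intro φ _ p => .imp φ (PTree.concl p)

/-- The open (undischarged) assumption occurrences of a derivation tree. -/
def PTree.openAssumps : PTree → Finset (Formula × ℕ)
  | .ax φ n => {(φ, n)}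
  | .elim p q => PTree.openAssumps p ∪ PTree.openAssumps q
  | .intro φ S p => PTree.openAssumps p \ S.image (fun n => (φ, n))

/-- Well-formedness: `⊃`-elimination has a minor premise `φ` and a major
premise `φ ⊃ ψ` and concludes `ψ`. -/
inductive PTree.WF : PTree → Prop
  | ax (φ : Formula) (n : ℕ) : PTree.WF (.ax φ n)
  | elim {p q : PTree} : PTree.WF p → PTree.WF q →
      (∃ ψ, PTree.concl q = Formula.imp (PTree.concl p) ψ) → PTree.WF (.elim p q)
  | intro {p : PTree} (φ : Formula) (S : Finset ℕ) : PTree.WF p → PTree.WF (.intro φ S p)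

/-- A derivation is greedy when every `⊃`-introduction discharges *all* open
occurrences of its antecedent on which its premise depends. -/
inductive PTree.Greedy : PTree → Prop
  | ax (φ : Formula) (n : ℕ) : PTree.Greedy (.ax φ n)
  | elim {p q : PTree} : PTree.Greedy p → PTree.Greedy q → PTree.Greedy (.elim p q)
  | intro {p : PTree} {φ : Formula} {S : Finset ℕ} : PTree.Greedy p →
      (∀ n, (φ, n) ∈ PTree.openAssumps p → n ∈ S) → PTree.Greedy (.intro φ S p)

/-! Enlarging the discharge set of every `⊃`-introduction to all open occurrences of its
antecedent keeps the tree well formed and its conclusion unchanged, and can only close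
further assumptions. -/

namespace PTree

def openClasses (φ : Formula) (p : PTree) : Finset ℕ :=
  (p.openAssumps.filter (·.1 = φ)).image Prod.snd

theorem mem_openClasses {φ : Formula} {p : PTree} {n : ℕ} :
    n ∈ p.openClasses φ ↔ (φ, n) ∈ p.openAssumps := by
  simp [openClasses, and_comm]

def greedify : PTree → PTree
  | ax φ n => ax φ n
  | elim p q => elim p.greedify q.greedify
  | intro φ S p => intro φ (S ∪ p.greedify.openClasses φ) p.greedify

theorem concl_greedify (p : PTree) : p.greedify.concl = p.concl := by
  induction p with
  | ax φ n => rfl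
  | elim p q _ hq => simp only [greedify, concl, hq]
  | intro φ S p hp => simp only [greedify, concl, hp]

theorem openAssumps_greedify_subset (p : PTree) : p.greedify.openAssumps ⊆ p.openAssumps := by
  induction p with
  | ax φ n => exact Finset.Subset.rfl
  | elim p q hp hq => exact Finset.union_subset_union hp hq
  | intro φ S p hp =>
    exact Finset.sdiff_subset_sdiff hp
      (Finset.image_subset_image Finset.subset_union_left)

theorem WF.greedify {p : PTree} (h : p.WF) : p.greedify.WF := by
  induction h with
  | ax φ n => exact .ax φ n
  | elim _ _ hconcl hp hq =>
    refine .elim hp hq ?_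
    rw [concl_greedify, concl_greedify]
    exact hconcl
  | intro φ S _ hp => exact .intro _ _ hp

theorem greedy_greedify (p : PTree) : p.greedify.Greedy := by
  induction p with
  | ax φ n => exact .ax φ n
  | elim p q hp hq => exact .elim hp hq
  | intro φ S p hp =>
    exact .intro hp fun n hn => Finset.mem_union_right _ (mem_openClasses.2 hn)

end PTree

/-- if `Γ ⊢ α` in `M⊃` then there is a derivation of `α` from `Γ`
in which every `⊃`-introduction is greedy. -/
theorem greedy_intro_complete (Γ : Finset Formula) (α : Formula) (d : PTree)
    (hwf : d.WF) (hc : d.concl = α)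
    (hΓ : (d.openAssumps).image Prod.fst ⊆ Γ) :
    ∃ d' : PTree, d'.WF ∧ d'.concl = α ∧
      (d'.openAssumps).image Prod.fst ⊆ Γ ∧ d'.Greedy :=
  ⟨d.greedify, hwf.greedify, d.concl_greedify.trans hc,
    (Finset.image_subset_image d.openAssumps_greedify_subset).trans hΓ, d.greedy_greedify⟩
end

section
/- Each horizontal compression rule, applied in algorithmic position to a valid DLDS, yields a DLDS whose colored deduction subgraphs remain acyclic for every color: since every deduction edge introduced goes from a higher level to the next lower level and every ancestor edge goes from a lower level to a higher level, no monochromatic cycle among deduction edges can be created (Color-Acyclicity preservation). -/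
/-- Colors of deduction edges: an ordinal color (with `ord 0` the default
color of uncollapsed edges) or the special color `λ`. -/
inductive Color : Type
  | ord : ℕ → Color
  | lam : Color
  deriving DecidableEq

/-- A dag-like derivability structure (DLDS): colored deduction edges `ED`,
ancestor edges `EA`, hypothesis marks `hyp`, root `r`, levels, formula labels
`l`, dependency-set labels `L` on deduction edges, and relative-address path
labels `P` on ancestor edges. -/
structure DLDS (V : Type) where
  ED : Color → V → V → Prop
  EA : V → V → Prop
  hyp : V → Prop
  r : V
  level : V → ℕ
  l : V → Formula
  L : Color → V → V → Finset Formula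
  P : V → V → List Color

/-- The set of outgoing deduction edges (color, target) of a node. -/
def DLDS.outs {V : Type} (D : DLDS V) (u : V) : Set (Color × V) :=
  {p | D.ED p.1 u p.2}

/-- The relative-address resolution algorithm: starting at `u` and following
the address `γ`, at a node with a unique outgoing deduction edge follow it
(without consuming), at a node with several outgoing edges follow the unique
edge whose color is the head of the remaining address, consuming it; an empty
remaining address stops. `Resolves D u γ v` holds when the walk reaches `v`. -/
inductive Resolves {V : Type} (D : DLDS V) : V → List Color → V → Prop
  | done (u : V) : Resolves D u [] u
  | single {u w v : V} {c : Color} {γ : List Color} :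
      (D.outs u).ncard = 1 → D.ED c u w → γ ≠ [] →
      Resolves D w γ v → Resolves D u γ v
  | branch {u w v : V} {c : Color} {γ : List Color} :
      1 < (D.outs u).ncard → D.ED c u w →
      (∀ c' w', D.ED c' u w' → c' = c → w' = w) →
      Resolves D w γ v → Resolves D u (c :: γ) v

/-- Validity of a DLDS (graph-theoretic part): the colored deduction graph is
leveled with root at level 0, color-acyclic and simple, ancestor edges go from
strictly lower to higher levels, and `P` records relative addresses. -/
structure DLDS.Valid {V : Type} (D : DLDS V) : Prop where
  leveled : ∀ c a b, D.ED c a b → D.level a = D.level b + 1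
  rootLevel : D.level D.r = 0
  colorAcyclic : ∀ c a, ¬ Relation.TransGen (D.ED c) a a
  simple : ∀ a b c c', D.ED c a b → D.ED c' a b → c = c'
  targetUnique : ∀ c a b b', D.ED c a b → D.ED c a b' → b = b'
  ancLevel : ∀ a b, D.EA a b → D.level a < D.level b
  backway : ∀ a b, D.EA a b → Resolves D b (D.P a b) a

/-- Merging `v` into `u`. -/
def merge {V : Type} [DecidableEq V] (u v x : V) : V := if x = v then u else x

/-- A generic horizontal compression rule application (`HCom(u,v)`) collapsing
the same-level, same-label nodes `u` and `v`: levels, labels and the root are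
unchanged, every deduction edge of the result is the image under the merge of
a deduction edge of the input (possibly recolored), and ancestor edges of the
result go from lower to strictly higher levels. -/
structure Collapse {V : Type} [DecidableEq V] (D D' : DLDS V) (u v : V) : Prop where
  ne : u ≠ v
  sameLevel : D.level u = D.level v
  sameLabel : D.l u = D.l v
  level_eq : ∀ x, D'.level x = D.level x
  label_eq : ∀ x, D'.l x = D.l x
  root_eq : D'.r = D.r
  ed_image : ∀ c a b, D'.ED c a b →
      ∃ c' a' b', D.ED c' a' b' ∧ a = merge u v a' ∧ b = merge u v b'
  ea_up : ∀ a b, D'.EA a b → D'.level a < D'.level b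

/-! Merging two nodes of the same level keeps every deduction edge going from some level `n + 1`
to level `n`, so the level strictly decreases along every monochromatic path of the collapsed
structure, which therefore has no cycle. -/

theorem Relation.TransGen.not_refl_of_lt_comp {α β : Type*} [Preorder β] {r : α → α → Prop}
    (f : α → β) (hf : ∀ a b, r a b → f b < f a) (a : α) : ¬ Relation.TransGen r a a := by
  intro h
  have hlt : Relation.TransGen (· > ·) (f a) (f a) := h.lift f hf
  rw [Relation.transGen_eq_self] at hlt
  exact lt_irrefl _ hlt

theorem apply_merge_of_apply_eq {V : Type} {β : Type*} [DecidableEq V] (f : V → β) {u v : V}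
    (h : f u = f v) (x : V) : f (merge u v x) = f x := by
  unfold merge
  split_ifs with hx
  · rw [hx, h]
  · rfl

theorem Collapse.leveled {V : Type} [DecidableEq V] {D D' : DLDS V} {u v : V}
    (hc : Collapse D D' u v) (hD : ∀ c a b, D.ED c a b → D.level a = D.level b + 1) :
    ∀ c a b, D'.ED c a b → D'.level a = D'.level b + 1 := by
  intro c a b hab
  obtain ⟨c', a', b', hED, rfl, rfl⟩ := hc.ed_image c a b hab
  simp only [hc.level_eq, apply_merge_of_apply_eq D.level hc.sameLevel]
  exact hD c' a' b' hED

/-- every horizontal compression rule applied (in algorithmic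
position) to a valid DLDS preserves Color-Acyclicity: every monochromatic
deduction subgraph of the result is acyclic. -/
theorem collapse_preserves_color_acyclicity {V : Type} [DecidableEq V]
    (D D' : DLDS V) (u v : V) (hval : D.Valid) (hc : Collapse D D' u v) :
    ∀ (c : Color) (a : V), ¬ Relation.TransGen (D'.ED c) a a := by
  intro c
  refine Relation.TransGen.not_refl_of_lt_comp D'.level fun a b hab => ?_
  rw [hc.leveled hval.leveled c a b hab]
  exact Nat.lt_succ_self _
end

section
/- The horizontal compression algorithm terminates: applying the compression rules level by level from level 1 up to the height of the input derivation, collapsing within each level pairs of nodes labeled by the same formula, and then running a second pass of MDE rules, halts after finitely many steps and produces a DLDS in which no level contains two distinct nodes labeled by the same formula. -/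
/-- A DLDS with an explicit set `alive` of live (not yet collapsed-away)
nodes. -/
structure LDLDS (V : Type) where
  alive : Finset V
  ED : Color → V → V → Prop
  EA : V → V → Prop
  r : V
  level : V → ℕ
  l : V → Formula

/-- The result of collapsing node `v` into node `u`: `v` is removed from the
live nodes and all edges are transported along the merge. -/
def mergeD {V : Type} [DecidableEq V] (D : LDLDS V) (u v : V) : LDLDS V where
  alive := D.alive.erase v
  ED := fun c a b => ∃ a' b', D.ED c a' b' ∧ a = merge u v a' ∧ b = merge u v b'
  EA := fun a b => ∃ a' b', D.EA a' b' ∧ a = merge u v a' ∧ b = merge u v b'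
  r := merge u v D.r
  level := D.level
  l := D.l

/-- One step of the horizontal compression algorithm: collapse two distinct
live nodes at the same level labeled by the same formula. -/
def HStep {V : Type} [DecidableEq V] (D D' : LDLDS V) : Prop :=
  ∃ u v, u ∈ D.alive ∧ v ∈ D.alive ∧ u ≠ v ∧
    D.level u = D.level v ∧ D.l u = D.l v ∧ D' = mergeD D u v

namespace HStep

variable {V : Type} [DecidableEq V]

theorem card_alive_lt {D D' : LDLDS V} (h : HStep D D') : D'.alive.card < D.alive.card := by
  obtain ⟨u, v, -, hv, -, -, -, rfl⟩ := h
  exact Finset.card_erase_lt_of_mem hv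

theorem wellFounded_flip : WellFounded (fun D' D : LDLDS V => HStep D D') :=
  (measure fun D : LDLDS V => D.alive.card).wf.mono fun _ _ h => h.card_alive_lt

theorem label_ne_of_forall_not {D : LDLDS V} (hD : ∀ D', ¬ HStep D D') {u v : V}
    (hu : u ∈ D.alive) (hv : v ∈ D.alive) (hne : u ≠ v) (hlevel : D.level u = D.level v) :
    D.l u ≠ D.l v :=
  fun hl => hD _ ⟨u, v, hu, hv, hne, hlevel, hl, rfl⟩

end HStep

/-- the horizontal compression algorithm terminates — the
collapse-step relation is well-founded — and any structure on which no
further step is possible has no level containing two distinct (live) nodes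
labeled by the same formula. -/
theorem horizontal_compression_terminates {V : Type} [DecidableEq V] :
    WellFounded (fun D' D : LDLDS V => HStep D D') ∧
    ∀ D : LDLDS V, (∀ D', ¬ HStep D D') →
      ∀ u v, u ∈ D.alive → v ∈ D.alive → u ≠ v →
        D.level u = D.level v → D.l u ≠ D.l v :=
  ⟨HStep.wellFounded_flip, fun _ hD _ _ => HStep.label_ne_of_forall_not hD⟩
end
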